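/- Let α, μ, ν, κ, D be real constants with ν ≠ 0, and set γ = 0 and β = 3ν. Then the travelling-wave coefficients A₁(y) = α/(ν y + μ D²), A₀ = 0, B₀(y) = 3ν/(ν y + μ D²), C₂ = C₁ = 0, C₀(y) = (κ − D²)/(ν y + μ D²), D₄ = D₃ = D₂ = D₁ = D₀ = 0 satisfy the ten linearization conditions (L1)–(L10) at every point (x,y) with ν y + μ D² ≠ 0 if and only if α = 4ν and κ = D². -/

import Mathlib

open Real Set

/-- Partial derivative in the first variable. -/
noncomputable def pdx (f : ℝ → ℝ → ℝ) (x y : ℝ) : ℝ := deriv (fun x' => f x' y) x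

/-- Partial derivative in the second variable. -/
noncomputable def pdy (f : ℝ → ℝ → ℝ) (x y : ℝ) : ℝ := deriv (fun y' => f x y') y

/-- The ten linearization conditions (L1)–(L10) at a point `(x, y)`. -/
def LinConds (A1 A0 B0 C2 C1 C0 D4 D3 D2 D1 D0 : ℝ → ℝ → ℝ) (x y : ℝ) : Prop :=
  -- (L1)
  pdy A0 x y - pdx A1 x y = 0 ∧
  -- (L2)
  4 * B0 x y - 3 * A1 x y = 0 ∧
  -- (L3)
  12 * pdy A1 x y + 3 * (A1 x y) ^ 2 - 8 * C2 x y = 0 ∧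
  -- (L4)
  12 * pdx A1 x y + 3 * A0 x y * A1 x y - 4 * C1 x y = 0 ∧
  -- (L5)
  32 * pdy C0 x y + 12 * pdx A0 x y * A1 x y - 16 * pdx C1 x y
    + 3 * (A0 x y) ^ 2 * A1 x y - 4 * A0 x y * C1 x y = 0 ∧
  -- (L6)
  4 * pdy C2 x y + A1 x y * C2 x y - 24 * D4 x y = 0 ∧
  -- (L7)
  4 * pdy C1 x y + A1 x y * C1 x y - 12 * D3 x y = 0 ∧
  -- (L8)
  16 * pdx C1 x y - 12 * pdx A0 x y * A1 x y - 3 * (A0 x y) ^ 2 * A1 x y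
    + 4 * A0 x y * C1 x y + 8 * A1 x y * C0 x y - 32 * D2 x y = 0 ∧
  -- (L9)
  192 * pdx D2 x y + 36 * pdx A0 x y * A0 x y * A1 x y - 48 * pdx A0 x y * C1 x y
    - 48 * pdx C0 x y * A1 x y - 288 * pdy D1 x y + 9 * (A0 x y) ^ 3 * A1 x y
    - 12 * (A0 x y) ^ 2 * C1 x y - 36 * A0 x y * A1 x y * C0 x y
    + 48 * A0 x y * D2 x y + 32 * C0 x y * C1 x y = 0 ∧
  -- (L10)
  384 * pdx (pdy D1) x y -
    (3 * ((3 * A0 x y * A1 x y - 4 * C1 x y) * (A0 x y) ^ 2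
          + 16 * (2 * A1 x y * D1 x y + C0 x y * C1 x y)
          - 16 * (A1 x y * C0 x y - D2 x y) * A0 x y) * A0 x y
      - 32 * (4 * (C1 x y * D1 x y - 2 * C2 x y * D0 x y + C0 x y * D2 x y)
          + (3 * A1 x y * D0 x y - (C0 x y) ^ 2) * A1 x y)
      - 96 * pdy D1 x y * A0 x y + 384 * pdy D0 x y * A1 x y
      + 1536 * pdy (pdy D0) x y
      - 16 * (3 * A0 x y * A1 x y - 4 * C1 x y) * pdx C0 x y
      + 12 * ((3 * A0 x y * A1 x y - 4 * C1 x y) * A0 x y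
          - 4 * (A1 x y * C0 x y - 4 * D2 x y)) * pdx A0 x y) = 0

/-! All coefficients depend on `y` alone, so every `x`-derivative vanishes, and with
`A₀ = C₁ = C₂ = Dᵢ = 0` only (L2), (L3), (L5) and (L8) survive ((L10) collapses to
`A₁ C₀² = 0`, a consequence of (L8)). Writing `s = ν y + μ D² ≠ 0`, (L2) reads
`3 (4ν - α) / s = 0` and (L5) reads `-32 ν (κ - D²) / s² = 0`, forcing `α = 4ν` and `κ = D²`,
which in turn make (L3) and (L8) vanish. So the conditions hold at one admissible point iff
they hold at all, and since `ν ≠ 0` an admissible point exists. -/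

lemma deriv_div_affine (a ν c y : ℝ) (h : ν * y + c ≠ 0) :
    deriv (fun y => a / (ν * y + c)) y = -(a * ν) / (ν * y + c) ^ 2 := by
  have hlin : HasDerivAt (fun y => ν * y + c) ν y := by
    simpa using ((hasDerivAt_id y).const_mul ν).add_const c
  rw [show (fun y => a / (ν * y + c)) = (fun _ => a) / (fun y => ν * y + c) from rfl,
    ((hasDerivAt_const y a).div hlin h).deriv]
  ring

lemma linConds_yOnly_iff (A1 B0 C0 : ℝ → ℝ) (x y : ℝ) :
    LinConds (fun _ y => A1 y) (fun _ _ => 0) (fun _ y => B0 y) (fun _ _ => 0) (fun _ _ => 0)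
        (fun _ y => C0 y) (fun _ _ => 0) (fun _ _ => 0) (fun _ _ => 0) (fun _ _ => 0)
        (fun _ _ => 0) x y ↔
      4 * B0 y = 3 * A1 y ∧ 12 * deriv A1 y + 3 * A1 y ^ 2 = 0 ∧ deriv C0 y = 0 ∧
        A1 y * C0 y = 0 := by
  simp [LinConds, pdx, pdy, sub_eq_zero, or_comm]

lemma linConds_travellingWave_iff (α μ ν κ D x y : ℝ) (hν : ν ≠ 0)
    (hs : ν * y + μ * D ^ 2 ≠ 0) :
    LinConds
        (fun _ y => α / (ν * y + μ * D ^ 2)) (fun _ _ => 0)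
        (fun _ y => 3 * ν / (ν * y + μ * D ^ 2)) (fun _ _ => 0) (fun _ _ => 0)
        (fun _ y => (κ - D ^ 2) / (ν * y + μ * D ^ 2)) (fun _ _ => 0) (fun _ _ => 0)
        (fun _ _ => 0) (fun _ _ => 0) (fun _ _ => 0) x y ↔
      α = 4 * ν ∧ κ = D ^ 2 := by
  rw [linConds_yOnly_iff, deriv_div_affine _ _ _ _ hs, deriv_div_affine _ _ _ _ hs]
  constructor
  · rintro ⟨hL2, -, hL5, -⟩
    field_simp at hL2 hL5
    rw [mul_zero, neg_eq_zero, mul_eq_zero, sub_eq_zero] at hL5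
    exact ⟨hL2.symm, hL5.resolve_left hν⟩
  · rintro ⟨rfl, rfl⟩
    refine ⟨by ring, by field_simp; ring, by simp, by simp⟩

/-- Case `ν ≠ 0`, `γ = 0`, `β = 3ν`: the travelling-wave coefficients satisfy the ten
linearization conditions (L1)–(L10) at every point `(x, y)` with `ν y + μ D² ≠ 0`
if and only if `α = 4ν` and `κ = D²`. -/
theorem linconds_case_gamma_zero_beta_three_nu (α μ ν κ D : ℝ) (hν : ν ≠ 0) :
    (∀ x y : ℝ, ν * y + μ * D ^ 2 ≠ 0 →
      LinConds
        (fun _ y => α / (ν * y + μ * D ^ 2))               -- A₁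
        (fun _ _ => 0)                                     -- A₀
        (fun _ y => 3 * ν / (ν * y + μ * D ^ 2))           -- B₀
        (fun _ _ => 0)                                     -- C₂
        (fun _ _ => 0)                                     -- C₁
        (fun _ y => (κ - D ^ 2) / (ν * y + μ * D ^ 2))     -- C₀
        (fun _ _ => 0)                                     -- D₄
        (fun _ _ => 0)                                     -- D₃
        (fun _ _ => 0)                                     -- D₂
        (fun _ _ => 0)                                     -- D₁
        (fun _ _ => 0)                                     -- D₀
        x y) ↔
      (α = 4 * ν ∧ κ = D ^ 2) := by
  constructor
  · intro h
    have hs : ν * ((1 - μ * D ^ 2) / ν) + μ * D ^ 2 ≠ 0 := by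
      rw [mul_div_cancel₀ _ hν, sub_add_cancel]
      exact one_ne_zero
    exact (linConds_travellingWave_iff α μ ν κ D 0 _ hν hs).1 (h 0 _ hs)
  · intro h x y hy
    exact (linConds_travellingWave_iff α μ ν κ D x y hν hy).2 h
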